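/- arXiv:2506.14916 — 3 statements merged into one kernel-verified Lean document; each statement's English description precedes it below -/
import Mathlib

section
/- Let f : ℝ^d → ℝ and x ∈ ℝ^d. Assume each foreground function N_j is differentiable at x and f is differentiable at x. Suppose the background basis reproduces f at every foreground node, i.e. Σ_{I=1}^{NP} Ψ_I(y_j) f(x_I) = f(y_j) for every j = 1,…,ν, and the foreground derivatives reproduce the derivative of f at x, i.e. Σ_{j=1}^{ν} f(y_j) • Df_j = Df, where Df_j is the Fréchet derivative of N_j at x and Df is the Fréchet derivative of f at x. Then each Ψ̂_I is differentiable at x and the derivatives of the interpolated basis satisfy the gradient reproducing condition: Σ_{I=1}^{NP} f(x_I) • (Fréchet derivative of Ψ̂_I at x) = Df. -/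
/-- Under the reproducing condition of the background basis at the
foreground nodes and the gradient reproducing condition of the foreground basis at
`x`, each interpolated function `Ψ̂_I(x) = Σ_j Ψ_I(y_j) N_j(x)` is differentiable at
`x` and the derivatives of the interpolated basis satisfy the gradient reproducing
condition at `x`. -/
theorem int_rkpm_gradient_reproducing_condition
    {d NP ν : ℕ}
    (Ψ : Fin NP → (Fin d → ℝ) → ℝ)
    (N : Fin ν → (Fin d → ℝ) → ℝ)
    (xI : Fin NP → (Fin d → ℝ))
    (y : Fin ν → (Fin d → ℝ))
    (f : (Fin d → ℝ) → ℝ)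
    (x : Fin d → ℝ)
    (hNdiff : ∀ j : Fin ν, DifferentiableAt ℝ (N j) x)
    (hfdiff : DifferentiableAt ℝ f x)
    (hΨ : ∀ j : Fin ν, (∑ I : Fin NP, Ψ I (y j) * f (xI I)) = f (y j))
    (hDN : (∑ j : Fin ν, f (y j) • fderiv ℝ (N j) x) = fderiv ℝ f x) :
    (∀ I : Fin NP,
        DifferentiableAt ℝ (fun z => ∑ j : Fin ν, Ψ I (y j) * N j z) x) ∧
      (∑ I : Fin NP,
          f (xI I) • fderiv ℝ (fun z => ∑ j : Fin ν, Ψ I (y j) * N j z) x) =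
        fderiv ℝ f x := by
  have hdiff : ∀ I : Fin NP,
      DifferentiableAt ℝ (fun z => ∑ j : Fin ν, Ψ I (y j) * N j z) x := fun I =>
    DifferentiableAt.fun_sum fun j _ => (hNdiff j).const_mul _
  refine ⟨hdiff, ?_⟩
  have hfd : ∀ I : Fin NP,
      fderiv ℝ (fun z => ∑ j : Fin ν, Ψ I (y j) * N j z) x
      = ∑ j : Fin ν, Ψ I (y j) • fderiv ℝ (N j) x := by
    intro I
    rw [fderiv_fun_sum (fun j _ => ((hNdiff j).const_mul _))]
    congr 1
    ext j
    rw [fderiv_const_mul (hNdiff j)]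
  calc (∑ I : Fin NP, f (xI I) • fderiv ℝ (fun z => ∑ j : Fin ν, Ψ I (y j) * N j z) x)
      = ∑ I : Fin NP, ∑ j : Fin ν, (Ψ I (y j) * f (xI I)) • fderiv ℝ (N j) x := by
        refine Finset.sum_congr rfl fun I _ => ?_
        rw [hfd I, Finset.smul_sum]
        refine Finset.sum_congr rfl fun j _ => ?_
        rw [smul_smul, mul_comm]
    _ = ∑ j : Fin ν, (∑ I : Fin NP, Ψ I (y j) * f (xI I)) • fderiv ℝ (N j) x := by
        rw [Finset.sum_comm]
        exact Finset.sum_congr rfl fun j _ => (Finset.sum_smul).symm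
    _ = fderiv ℝ f x := by
        simp_rw [hΨ]; exact hDN
end

section
/- Let f : ℝ^d → ℝ and x ∈ ℝ^d. Assume each foreground function N_j is twice continuously differentiable on ℝ^d and f is twice continuously differentiable on ℝ^d. Suppose the background basis reproduces f at every foreground node, i.e. Σ_{I=1}^{NP} Ψ_I(y_j) f(x_I) = f(y_j) for every j = 1,…,ν, and the second derivatives of the foreground basis reproduce the second derivative of f at x, i.e. Σ_{j=1}^{ν} f(y_j) • D²N_j(x) = D²f(x), where D² denotes the second iterated Fréchet derivative. Then the second derivatives of the interpolated basis satisfy the second-order reproducing condition: Σ_{I=1}^{NP} f(x_I) • D²Ψ̂_I(x) = D²f(x). -/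
open Finset

theorem iteratedFDeriv_sum_const_mul_apply {𝕜 E ι : Type*} [NontriviallyNormedField 𝕜]
    [NormedAddCommGroup E] [NormedSpace 𝕜 E] {n : ℕ} {s : Finset ι} (c : ι → 𝕜)
    {g : ι → E → 𝕜} {x : E} (hg : ∀ j ∈ s, ContDiffAt 𝕜 n (g j) x) :
    iteratedFDeriv 𝕜 n (fun z => ∑ j ∈ s, c j * g j z) x =
      ∑ j ∈ s, c j • iteratedFDeriv 𝕜 n (g j) x := by
  have hsum : (fun z => ∑ j ∈ s, c j * g j z) = ∑ j ∈ s, fun z => c j • g j z := by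
    ext z; rw [Finset.sum_apply]; rfl
  rw [hsum, iteratedFDeriv_sum_apply fun j hj => (hg j hj).const_smul (c j)]
  exact sum_congr rfl fun j hj => iteratedFDeriv_const_smul_apply' (hg j hj)

theorem Finset.sum_smul_sum_smul_comm {ι κ R M : Type*} [CommSemiring R] [AddCommMonoid M]
    [Module R M] (s : Finset ι) (t : Finset κ) (a : ι → R) (b : ι → κ → R) (v : κ → M) :
    ∑ i ∈ s, a i • ∑ j ∈ t, b i j • v j = ∑ j ∈ t, (∑ i ∈ s, b i j * a i) • v j := by
  simp_rw [smul_sum, smul_smul, sum_smul, mul_comm]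
  exact sum_comm

theorem int_rkpm_second_derivative_reproducing_condition_general
    {d NP ν : ℕ}
    (Ψ : Fin NP → (Fin d → ℝ) → ℝ)
    (N : Fin ν → (Fin d → ℝ) → ℝ)
    (xI : Fin NP → (Fin d → ℝ))
    (y : Fin ν → (Fin d → ℝ))
    (f : (Fin d → ℝ) → ℝ)
    (x : Fin d → ℝ)
    (hNsmooth : ∀ j : Fin ν, ContDiff ℝ 2 (N j))
    (hΨ : ∀ j : Fin ν, (∑ I : Fin NP, Ψ I (y j) * f (xI I)) = f (y j))
    (hD2N : (∑ j : Fin ν, f (y j) • iteratedFDeriv ℝ 2 (N j) x) =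
        iteratedFDeriv ℝ 2 f x) :
    (∑ I : Fin NP,
        f (xI I) •
          iteratedFDeriv ℝ 2 (fun z => ∑ j : Fin ν, Ψ I (y j) * N j z) x) =
      iteratedFDeriv ℝ 2 f x := by
  calc ∑ I, f (xI I) • iteratedFDeriv ℝ 2 (fun z => ∑ j, Ψ I (y j) * N j z) x
      = ∑ I, f (xI I) • ∑ j, Ψ I (y j) • iteratedFDeriv ℝ 2 (N j) x := by
        simp only [iteratedFDeriv_sum_const_mul_apply _ fun j _ => (hNsmooth j).contDiffAt]
    _ = ∑ j, (∑ I, Ψ I (y j) * f (xI I)) • iteratedFDeriv ℝ 2 (N j) x :=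
        sum_smul_sum_smul_comm _ _ _ _ _
    _ = iteratedFDeriv ℝ 2 f x := by simp only [hΨ, hD2N]

/-- If the foreground functions and `f` are twice continuously
differentiable, the background basis reproduces `f` at the foreground nodes, and the
second derivatives of the foreground basis reproduce the second derivative of `f` at
`x`, then the second derivatives of the interpolated basis
`Ψ̂_I(x) = Σ_j Ψ_I(y_j) N_j(x)` satisfy the second-order reproducing condition. -/
theorem int_rkpm_second_derivative_reproducing_condition
    {d NP ν : ℕ}
    (Ψ : Fin NP → (Fin d → ℝ) → ℝ)
    (N : Fin ν → (Fin d → ℝ) → ℝ)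
    (xI : Fin NP → (Fin d → ℝ))
    (y : Fin ν → (Fin d → ℝ))
    (f : (Fin d → ℝ) → ℝ)
    (x : Fin d → ℝ)
    (hNsmooth : ∀ j : Fin ν, ContDiff ℝ 2 (N j))
    (hfsmooth : ContDiff ℝ 2 f)
    (hΨ : ∀ j : Fin ν, (∑ I : Fin NP, Ψ I (y j) * f (xI I)) = f (y j))
    (hD2N : (∑ j : Fin ν, f (y j) • iteratedFDeriv ℝ 2 (N j) x) =
        iteratedFDeriv ℝ 2 f x) :
    (∑ I : Fin NP,
        f (xI I) •
          iteratedFDeriv ℝ 2 (fun z => ∑ j : Fin ν, Ψ I (y j) * N j z) x) =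
      iteratedFDeriv ℝ 2 f x :=
  int_rkpm_second_derivative_reproducing_condition_general Ψ N xI y f x hNsmooth hΨ hD2N
end

section
/- Fix x ∈ ℝ^d and suppose the moment matrix M(x) is invertible, and that the first component of the basis vector is the constant 1, i.e. (H(y))_1 = 1 for all y ∈ ℝ^d. Then the RKPM shape functions form a partition of unity at x: Σ_{I=1}^{NP} Ψ_I(x) = 1. -/
open Matrix

/-!
Write `e₁` for the first standard basis vector. Because every `H y` has first entry `1`,
`M e₁ = Σ_I Φ_I(x) H(x - x_I)`; hence `Σ_I Ψ_I(x) = H(0)ᵀ M⁻¹ M e₁ = H(0)ᵀ e₁ = H(0)₁ = 1`.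
-/

theorem sum_smul_vecMulVec_self_mulVec_single {ι m R : Type*} [Fintype m] [DecidableEq m]
    [CommSemiring R] (s : Finset ι) (c : ι → R) (v : ι → m → R) {j : m}
    (hv : ∀ i ∈ s, v i j = 1) :
    (∑ i ∈ s, c i • vecMulVec (v i) (v i)) *ᵥ Pi.single j 1 = ∑ i ∈ s, c i • v i := by
  rw [sum_mulVec]
  refine Finset.sum_congr rfl fun i hi => ?_
  rw [smul_mulVec, vecMulVec_mulVec, dotProduct_single, hv i hi, one_mul, MulOpposite.op_one,
    one_smul]

theorem sum_mul_dotProduct_inv_mulVec {ι m R : Type*} [Fintype m] [DecidableEq m] [CommRing R]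
    {M : Matrix m m R} (hM : IsUnit M.det) (s : Finset ι) (c : ι → R) (v : ι → m → R)
    (w e : m → R) (he : M *ᵥ e = ∑ i ∈ s, c i • v i) :
    ∑ i ∈ s, c i * (w ⬝ᵥ (M⁻¹ *ᵥ v i)) = w ⬝ᵥ e := by
  calc ∑ i ∈ s, c i * (w ⬝ᵥ (M⁻¹ *ᵥ v i))
      = w ⬝ᵥ (M⁻¹ *ᵥ ∑ i ∈ s, c i • v i) := by
        simp only [mulVec_sum, dotProduct_sum, mulVec_smul, dotProduct_smul, smul_eq_mul]
    _ = w ⬝ᵥ e := by rw [← he, mulVec_mulVec, nonsing_inv_mul M hM, one_mulVec]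

/-- If the moment matrix
`M(x) = Σ_I Φ_I(x) H(x - x_I) H(x - x_I)ᵀ` is invertible and the first component of
the basis vector is the constant `1`, then the RKPM shape functions
`Ψ_I(x) = Φ_I(x) (H(0)ᵀ M(x)⁻¹ H(x - x_I))` form a partition of unity at `x`. -/
theorem rkpm_partition_of_unity
    {d q NP : ℕ} (hq : 0 < q)
    (H : (Fin d → ℝ) → (Fin q → ℝ))
    (xI : Fin NP → (Fin d → ℝ))
    (Φ : Fin NP → (Fin d → ℝ) → ℝ)
    (x : Fin d → ℝ)
    (M : Matrix (Fin q) (Fin q) ℝ)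
    (hM : M = ∑ I : Fin NP,
        Φ I x • Matrix.vecMulVec (H (x - xI I)) (H (x - xI I)))
    (hInv : IsUnit M.det)
    (hH1 : ∀ y : Fin d → ℝ, H y ⟨0, hq⟩ = 1)
    (Ψ : Fin NP → ℝ)
    (hΨ : ∀ I : Fin NP, Ψ I = Φ I x * (H 0 ⬝ᵥ (M⁻¹ *ᵥ H (x - xI I)))) :
    (∑ I : Fin NP, Ψ I) = 1 := by
  have hMe₁ : M *ᵥ Pi.single ⟨0, hq⟩ 1 = ∑ I, Φ I x • H (x - xI I) := by
    rw [hM]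
    exact sum_smul_vecMulVec_self_mulVec_single _ _ _ fun I _ => hH1 _
  simp only [hΨ]
  rw [sum_mul_dotProduct_inv_mulVec hInv _ _ _ _ _ hMe₁, dotProduct_single, hH1, one_mul]
end
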